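/- arXiv:2407.12041 — 5 statements merged into one kernel-verified Lean document; each statement's English description precedes it below -/
import Mathlib

section
/- Let (U_m) and U₀ be bounded convex domains in R^n with d_H(U_m, U₀) → 0. Then for any fixed x₀ ∈ U₀ and k ∈ N, I_k^{U_m}(x₀) → I_k^{U₀}(x₀), and consequently v_{U_m}(x₀) → v_{U₀}(x₀), as m → ∞. -/
/-!
Let `closedBall x₀ r ⊆ U₀` and let `U_m` be `ε`-close to `U₀`. Separating a point from the open
convex set `U_m` shows `closedBall x₀ (r - ε) ⊆ U_m`. If a convex set contains `closedBall x₀ ρ`,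
then a point within `ε` of it falls into it after shrinking towards `x₀` by the factor
`ρ / (ρ + ε)`. Applied along each ray, in both directions, this gives
`d_{U_m} ≤ (1 + ε / r) d_{U₀}` and `d_{U₀} ≤ (1 + 2ε / r) d_{U_m}`, so the radial functions
converge pointwise on the sphere. They are lower semicontinuous (the sets are open), hence
measurable, and eventually uniformly bounded, so dominated convergence gives the convergence of
every moment, and that of the variance follows.
-/

open MeasureTheory Metric

/-- The distance from `x` to the boundary of `U` in direction `σ`:
the length of the intersection of the ray `{x + t σ : t ≥ 0}` with `U`. -/
noncomputable def rayDist {n : ℕ} (U : Set (EuclideanSpace ℝ (Fin n)))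
    (x σ : EuclideanSpace ℝ (Fin n)) : ℝ :=
  sSup {t : ℝ | 0 ≤ t ∧ x + t • σ ∈ U}

/-- The `k`-th integral mean of the distance-to-the-boundary function over the unit sphere. -/
noncomputable def sphereMoment {n : ℕ} (U : Set (EuclideanSpace ℝ (Fin n))) (k : ℕ)
    (x : EuclideanSpace ℝ (Fin n)) : ℝ :=
  (((volume : Measure (EuclideanSpace ℝ (Fin n))).toSphere Set.univ).toReal)⁻¹ *
    ∫ σ : sphere (0 : EuclideanSpace ℝ (Fin n)) 1, (rayDist U x (σ : EuclideanSpace ℝ (Fin n)))^k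
      ∂((volume : Measure (EuclideanSpace ℝ (Fin n))).toSphere)

/-- The variance of the distance to the boundary. -/
noncomputable def varDist {n : ℕ} (U : Set (EuclideanSpace ℝ (Fin n)))
    (x : EuclideanSpace ℝ (Fin n)) : ℝ :=
  sphereMoment U 2 x - (sphereMoment U 1 x)^2

open Bornology Filter Topology

section NormedSpace

variable {E : Type*} [NormedAddCommGroup E]

theorem le_of_add_smul_mem_closedBall [NormedSpace ℝ E] {x σ : E} {t B : ℝ} (hσ : ‖σ‖ = 1)
    (ht : 0 ≤ t) (h : x + t • σ ∈ closedBall x B) : t ≤ B := by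
  rwa [mem_closedBall, dist_self_add_left, norm_smul, hσ, mul_one, Real.norm_of_nonneg ht] at h

theorem Convex.add_smul_sub_mem_of_closedBall_subset [NormedSpace ℝ E] {V : Set E}
    (hV : Convex ℝ V) {x y q : E} {ρ d : ℝ} (hρ : 0 < ρ) (hd : 0 < d)
    (hball : closedBall x ρ ⊆ V) (hy : y ∈ V) (hq : dist q y ≤ d) :
    x + (ρ / (ρ + d)) • (q - x) ∈ V := by
  -- The point is the convex combination of `y` and `u := x + (ρ / d) • (q - y) ∈ closedBall x ρ`.
  have hu : x + (ρ / d) • (q - y) ∈ V := by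
    refine hball ?_
    rw [mem_closedBall, dist_self_add_left, norm_smul, Real.norm_of_nonneg (by positivity),
      ← dist_eq_norm]
    calc ρ / d * dist q y ≤ ρ / d * d := by gcongr
      _ = ρ := div_mul_cancel₀ ρ hd.ne'
  have hcomb := hV hy hu (a := ρ / (ρ + d)) (b := d / (ρ + d)) (by positivity) (by positivity)
    (by field_simp)
  convert hcomb using 1
  rw [smul_add, smul_smul, div_mul_div_cancel₀' hd.ne']
  have hx : x = (ρ / (ρ + d)) • x + (d / (ρ + d)) • x := by
    rw [← add_smul, ← add_div, div_self (by positivity), one_smul]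
  nth_rewrite 1 [hx]
  module

theorem Convex.closedBall_sub_subset_of_forall_exists_dist_lt [InnerProductSpace ℝ E]
    [CompleteSpace E] {V : Set E} (hV : Convex ℝ V) (hVo : IsOpen V) {x : E} {r ε : ℝ}
    (hε : 0 ≤ ε) (hnear : ∀ u ∈ closedBall x r, ∃ y ∈ V, dist u y < ε) :
    closedBall x (r - ε) ⊆ V := by
  intro z hz
  by_contra hzV
  obtain ⟨f, hf⟩ := geometric_hahn_banach_open_point hV hVo hzV
  set v : E := (InnerProductSpace.toDual ℝ E).symm f
  have hfv : ∀ w, f w = inner ℝ v w := fun w => (InnerProductSpace.toDual_symm_apply).symm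
  -- Moving `z` by `ε` in the direction of `v` leaves a point of `closedBall x r` that is
  -- `ε`-close to `V`, although `V` lies in the half-space `{f < f z}`.
  set w : E := (ε / ‖v‖) • v
  have hw : ‖w‖ ≤ ε := by
    rw [norm_smul, Real.norm_of_nonneg (by positivity)]
    rcases eq_or_ne ‖v‖ 0 with h | h <;> simp [h, hε]
  have hfw : f w = ε * ‖v‖ := by
    rw [hfv, inner_smul_right, real_inner_self_eq_norm_sq]
    rcases eq_or_ne ‖v‖ 0 with h | h <;> field_simp [h]
  obtain ⟨y, hyV, hy⟩ := hnear (z + w) (by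
    rw [mem_closedBall] at hz ⊢
    calc dist (z + w) x ≤ dist (z + w) z + dist z x := dist_triangle ..
      _ ≤ r := by rw [dist_self_add_left]; linarith)
  have hfy : f (z + w - y) ≤ ε * ‖v‖ := by
    rw [hfv]
    calc inner ℝ v (z + w - y) ≤ ‖v‖ * ‖z + w - y‖ := real_inner_le_norm _ _
      _ ≤ ‖v‖ * ε := by gcongr; rw [← dist_eq_norm]; exact hy.le
      _ = ε * ‖v‖ := mul_comm _ _
  rw [map_sub, map_add, hfw] at hfy
  linarith [hf y hyV]

end NormedSpace

theorem subset_closedBall_add_of_forall_exists_dist_lt {α : Type*} [PseudoMetricSpace α]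
    {V W : Set α} {x : α} {R ε : ℝ} (hW : W ⊆ closedBall x R)
    (hnear : ∀ p ∈ V, ∃ y ∈ W, dist p y < ε) : V ⊆ closedBall x (R + ε) := by
  intro p hp
  obtain ⟨y, hy, hpy⟩ := hnear p hp
  calc dist p x ≤ dist p y + dist y x := dist_triangle ..
    _ ≤ R + ε := by linarith [mem_closedBall.1 (hW hy)]

theorem forall_exists_dist_lt_of_hausdorffDist_lt {α : Type*} [PseudoMetricSpace α]
    {s t : Set α} {ε : ℝ} (hs : s.Nonempty) (ht : t.Nonempty) (hsb : IsBounded s)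
    (htb : IsBounded t) (h : hausdorffDist s t < ε) :
    (∀ p ∈ s, ∃ y ∈ t, dist p y < ε) ∧ ∀ p ∈ t, ∃ y ∈ s, dist p y < ε := by
  have hfin := hausdorffEDist_ne_top_of_nonempty_of_bounded hs ht hsb htb
  refine ⟨fun p hp => exists_dist_lt_of_hausdorffDist_lt hp h hfin, fun p hp => ?_⟩
  obtain ⟨y, hy, hyp⟩ := exists_dist_lt_of_hausdorffDist_lt' hp h hfin
  exact ⟨y, hy, dist_comm p y ▸ hyp⟩

section RayDist

variable {n : ℕ}

local notation "𝔼" => EuclideanSpace ℝ (Fin n)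

theorem rayDist_nonneg (U : Set 𝔼) (x σ : 𝔼) : 0 ≤ rayDist U x σ :=
  Real.sSup_nonneg fun _ ht => ht.1

theorem rayDist_le_of_subset_closedBall {U : Set 𝔼} {x σ : 𝔼} {B : ℝ} (hB : 0 ≤ B)
    (hU : U ⊆ closedBall x B) (hσ : ‖σ‖ = 1) : rayDist U x σ ≤ B :=
  Real.sSup_le (fun _ ht => le_of_add_smul_mem_closedBall hσ ht.1 (hU ht.2)) hB

theorem le_rayDist {U : Set 𝔼} (hU : IsBounded U) {x σ : 𝔼} {t : ℝ} (hσ : ‖σ‖ = 1)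
    (ht : 0 ≤ t) (htU : x + t • σ ∈ U) : t ≤ rayDist U x σ := by
  obtain ⟨B, hB⟩ := hU.subset_closedBall x
  exact le_csSup ⟨B, fun s hs => le_of_add_smul_mem_closedBall hσ hs.1 (hB hs.2)⟩ ⟨ht, htU⟩

theorem lowerSemicontinuous_rayDist {U : Set 𝔼} (hUo : IsOpen U) (hUb : IsBounded U) (x : 𝔼) :
    LowerSemicontinuous fun σ : sphere (0 : 𝔼) 1 => rayDist U x σ := by
  intro σ a ha
  rcases Set.eq_empty_or_nonempty {t : ℝ | 0 ≤ t ∧ x + t • (σ : 𝔼) ∈ U} with h | h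
  · simp only [rayDist, h, Real.sSup_empty] at ha
    exact Eventually.of_forall fun σ' => ha.trans_le (rayDist_nonneg U x σ')
  obtain ⟨t, ⟨ht, htU⟩, hat⟩ := exists_lt_of_lt_csSup h ha
  have hcont : Continuous fun σ' : sphere (0 : 𝔼) 1 => x + t • (σ' : 𝔼) := by fun_prop
  filter_upwards [hcont.continuousAt.preimage_mem_nhds (hUo.mem_nhds htU)] with σ' hσ'
  exact hat.trans_le (le_rayDist hUb (norm_eq_of_mem_sphere σ') ht hσ')

theorem rayDist_le_mul_rayDist {V W : Set 𝔼} (hW : Convex ℝ W) (hWb : IsBounded W)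
    {x σ : 𝔼} {ρ d : ℝ} (hρ : 0 < ρ) (hd : 0 < d) (hball : closedBall x ρ ⊆ W) (hσ : ‖σ‖ = 1)
    (hnear : ∀ p ∈ V, ∃ y ∈ W, dist p y < d) :
    rayDist V x σ ≤ (1 + d / ρ) * rayDist W x σ := by
  refine Real.sSup_le (fun t ⟨ht, htV⟩ => ?_) (by positivity [rayDist_nonneg W x σ])
  obtain ⟨y, hy, hty⟩ := hnear _ htV
  have hmem := hW.add_smul_sub_mem_of_closedBall_subset hρ hd hball hy hty.le
  rw [add_sub_cancel_left, smul_smul] at hmem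
  calc t = (1 + d / ρ) * (ρ / (ρ + d) * t) := by field_simp
    _ ≤ (1 + d / ρ) * rayDist W x σ := by gcongr; exact le_rayDist hWb hσ (by positivity) hmem

theorem abs_rayDist_sub_rayDist_le {V W : Set 𝔼} (hVo : IsOpen V) (hVc : Convex ℝ V)
    (hWc : Convex ℝ W) {x σ : 𝔼} {r R ε : ℝ} (hr : 0 < r) (hε : 0 < ε) (hεr : ε ≤ r / 2)
    (hball : closedBall x r ⊆ W) (hWR : W ⊆ closedBall x R)
    (hVW : ∀ p ∈ V, ∃ y ∈ W, dist p y < ε) (hWV : ∀ p ∈ W, ∃ y ∈ V, dist p y < ε)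
    (hσ : ‖σ‖ = 1) :
    |rayDist V x σ - rayDist W x σ| ≤ 2 * ε / r * (R + ε) := by
  have hR : 0 ≤ R := dist_nonneg.trans (hWR (hball (mem_closedBall_self hr.le)))
  have hVR : V ⊆ closedBall x (R + ε) := subset_closedBall_add_of_forall_exists_dist_lt hWR hVW
  have hballV : closedBall x (r / 2) ⊆ V :=
    (closedBall_subset_closedBall (by linarith)).trans <|
      hVc.closedBall_sub_subset_of_forall_exists_dist_lt hVo hε.le fun u hu => hWV u (hball hu)
  have hW_le : rayDist W x σ ≤ R := rayDist_le_of_subset_closedBall hR hWR hσ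
  have hV_le : rayDist V x σ ≤ R + ε := rayDist_le_of_subset_closedBall (by positivity) hVR hσ
  have hVW_le : rayDist V x σ ≤ (1 + ε / r) * rayDist W x σ :=
    rayDist_le_mul_rayDist hWc (isBounded_closedBall.subset hWR) hr hε hball hσ hVW
  have hWV_le : rayDist W x σ ≤ (1 + ε / (r / 2)) * rayDist V x σ :=
    rayDist_le_mul_rayDist hVc (isBounded_closedBall.subset hVR) (by positivity) hε hballV hσ hWV
  rw [show ε / (r / 2) = 2 * ε / r by ring] at hWV_le
  have hV_le' := mul_le_mul_of_nonneg_left hV_le (by positivity : 0 ≤ 2 * ε / r)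
  have hW_le' := mul_le_mul_of_nonneg_left hW_le (by positivity : 0 ≤ ε / r)
  have hR_le : ε / r * R ≤ 2 * ε / r * (R + ε) := by gcongr <;> linarith
  rw [abs_le]
  constructor <;> linarith

theorem tendsto_rayDist_of_tendsto_hausdorffDist {U : ℕ → Set 𝔼} {U₀ : Set 𝔼}
    (hopen : ∀ m, IsOpen (U m)) (hconv : ∀ m, Convex ℝ (U m)) (hbdd : ∀ m, IsBounded (U m))
    (hne : ∀ m, (U m).Nonempty) (h₀conv : Convex ℝ U₀) (h₀bdd : IsBounded U₀) {x : 𝔼} {r : ℝ}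
    (hr : 0 < r) (hball : closedBall x r ⊆ U₀)
    (hH : Tendsto (fun m => hausdorffDist (U m) U₀) atTop (𝓝 0)) {σ : 𝔼} (hσ : ‖σ‖ = 1) :
    Tendsto (fun m => rayDist (U m) x σ) atTop (𝓝 (rayDist U₀ x σ)) := by
  obtain ⟨R, hR⟩ := h₀bdd.subset_closedBall x
  have h₀ne : U₀.Nonempty := ⟨x, hball (mem_closedBall_self hr.le)⟩
  -- `hausdorffDist` may vanish, so compare at the slightly larger positive scale `ε m`.
  set ε : ℕ → ℝ := fun m => hausdorffDist (U m) U₀ + 1 / ((m : ℝ) + 1)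
  have hε : Tendsto ε atTop (𝓝 0) := by
    simpa only [add_zero] using hH.add tendsto_one_div_add_atTop_nhds_zero_nat
  have hbound : ∀ᶠ m in atTop,
      dist (rayDist (U m) x σ) (rayDist U₀ x σ) ≤ 2 * ε m / r * (R + ε m) := by
    filter_upwards [hε.eventually (eventually_le_nhds (half_pos hr))] with m hm
    have hlt : hausdorffDist (U m) U₀ < ε m :=
      lt_add_of_pos_right _ Nat.one_div_pos_of_nat
    obtain ⟨hUU₀, hU₀U⟩ :=
      forall_exists_dist_lt_of_hausdorffDist_lt (hne m) h₀ne (hbdd m) h₀bdd hlt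
    exact abs_rayDist_sub_rayDist_le (hopen m) (hconv m) h₀conv hr
      (hausdorffDist_nonneg.trans_lt hlt) hm hball hR hUU₀ hU₀U hσ
  have hlim : Tendsto (fun m => 2 * ε m / r * (R + ε m)) atTop (𝓝 0) := by
    simpa using ((hε.const_mul 2).div_const r).mul (hε.const_add R)
  exact tendsto_iff_dist_tendsto_zero.2 <|
    squeeze_zero' (Eventually.of_forall fun _ => dist_nonneg) hbound hlim

theorem tendsto_sphereMoment_of_tendsto_hausdorffDist {U : ℕ → Set 𝔼} {U₀ : Set 𝔼}
    (hopen : ∀ m, IsOpen (U m)) (hconv : ∀ m, Convex ℝ (U m)) (hbdd : ∀ m, IsBounded (U m))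
    (hne : ∀ m, (U m).Nonempty) (h₀conv : Convex ℝ U₀) (h₀bdd : IsBounded U₀) {x : 𝔼} {r : ℝ}
    (hr : 0 < r) (hball : closedBall x r ⊆ U₀)
    (hH : Tendsto (fun m => hausdorffDist (U m) U₀) atTop (𝓝 0)) (k : ℕ) :
    Tendsto (fun m => sphereMoment (U m) k x) atTop (𝓝 (sphereMoment U₀ k x)) := by
  obtain ⟨R, hR⟩ := h₀bdd.subset_closedBall x
  have hR0 : 0 ≤ R := dist_nonneg.trans (hR (hball (mem_closedBall_self hr.le)))
  have h₀ne : U₀.Nonempty := ⟨x, hball (mem_closedBall_self hr.le)⟩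
  have hsub : ∀ᶠ m in atTop, U m ⊆ closedBall x (R + 1) := by
    filter_upwards [hH.eventually (gt_mem_nhds one_pos)] with m hm
    exact subset_closedBall_add_of_forall_exists_dist_lt hR
      (forall_exists_dist_lt_of_hausdorffDist_lt (hne m) h₀ne (hbdd m) h₀bdd hm).1
  have hmeas : ∀ m, AEStronglyMeasurable (fun σ : sphere (0 : 𝔼) 1 => rayDist (U m) x σ ^ k)
      (volume : Measure 𝔼).toSphere := fun m =>
    ((lowerSemicontinuous_rayDist (hopen m) (hbdd m) x).measurable.pow_const k).aestronglyMeasurable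
  have hlim : ∀ σ : sphere (0 : 𝔼) 1,
      Tendsto (fun m => rayDist (U m) x σ ^ k) atTop (𝓝 (rayDist U₀ x σ ^ k)) := fun σ =>
    (tendsto_rayDist_of_tendsto_hausdorffDist hopen hconv hbdd hne h₀conv h₀bdd hr hball hH
      (norm_eq_of_mem_sphere σ)).pow k
  have hbound : ∀ᶠ m in atTop, ∀ σ : sphere (0 : 𝔼) 1, ‖rayDist (U m) x σ ^ k‖ ≤ (R + 1) ^ k := by
    filter_upwards [hsub] with m hm σ
    rw [norm_pow, Real.norm_of_nonneg (rayDist_nonneg _ _ _)]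
    exact pow_le_pow_left₀ (rayDist_nonneg _ _ _)
      (rayDist_le_of_subset_closedBall (by positivity) hm (norm_eq_of_mem_sphere σ)) k
  exact Tendsto.const_mul _ <| tendsto_integral_filter_of_dominated_convergence _
    (Eventually.of_forall hmeas) (hbound.mono fun _ h => Eventually.of_forall h)
    (integrable_const _) (Eventually.of_forall hlim)

end RayDist

theorem moments_and_variance_tendsto_of_hausdorff_general {n : ℕ}
    (U : ℕ → Set (EuclideanSpace ℝ (Fin n))) (U₀ : Set (EuclideanSpace ℝ (Fin n)))
    (hopen : ∀ m, IsOpen (U m)) (hconv : ∀ m, Convex ℝ (U m))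
    (hbdd : ∀ m, Bornology.IsBounded (U m)) (hne : ∀ m, (U m).Nonempty)
    (h₀open : IsOpen U₀) (h₀conv : Convex ℝ U₀) (h₀bdd : Bornology.IsBounded U₀)
    (hH : Filter.Tendsto (fun m => Metric.hausdorffDist (U m) U₀) Filter.atTop (nhds 0))
    (x₀ : EuclideanSpace ℝ (Fin n)) (hx₀ : x₀ ∈ U₀) :
    (∀ k : ℕ, Filter.Tendsto (fun m => sphereMoment (U m) k x₀) Filter.atTop
        (nhds (sphereMoment U₀ k x₀))) ∧
      Filter.Tendsto (fun m => varDist (U m) x₀) Filter.atTop (nhds (varDist U₀ x₀)) := by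
  obtain ⟨r, hr, hball⟩ := nhds_basis_closedBall.mem_iff.1 (h₀open.mem_nhds hx₀)
  have hmoment := tendsto_sphereMoment_of_tendsto_hausdorffDist hopen hconv hbdd hne h₀conv
    h₀bdd hr hball hH
  exact ⟨hmoment, (hmoment 2).sub ((hmoment 1).pow 2)⟩

theorem moments_and_variance_tendsto_of_hausdorff {n : ℕ}
    (U : ℕ → Set (EuclideanSpace ℝ (Fin n))) (U₀ : Set (EuclideanSpace ℝ (Fin n)))
    (hopen : ∀ m, IsOpen (U m)) (hconv : ∀ m, Convex ℝ (U m))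
    (hbdd : ∀ m, Bornology.IsBounded (U m)) (hne : ∀ m, (U m).Nonempty)
    (h₀open : IsOpen U₀) (h₀conv : Convex ℝ U₀) (h₀bdd : Bornology.IsBounded U₀)
    (h₀ne : U₀.Nonempty)
    (hH : Filter.Tendsto (fun m => Metric.hausdorffDist (U m) U₀) Filter.atTop (nhds 0))
    (x₀ : EuclideanSpace ℝ (Fin n)) (hx₀ : x₀ ∈ U₀) :
    (∀ k : ℕ, Filter.Tendsto (fun m => sphereMoment (U m) k x₀) Filter.atTop
        (nhds (sphereMoment U₀ k x₀))) ∧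
      Filter.Tendsto (fun m => varDist (U m) x₀) Filter.atTop (nhds (varDist U₀ x₀)) :=
  moments_and_variance_tendsto_of_hausdorff_general U U₀ hopen hconv hbdd hne h₀open h₀conv h₀bdd hH
    x₀ hx₀
end

section
/- Let U be a bounded convex domain in R². For z₀ ∈ U and direction σ, the directional derivative of I_1^U satisfies D_σ I_1^U(z₀) = −(1/2π) ∫₀^{2π} sin(φ−σ) · ∂_φ d_U(z₀,φ) / d_U(z₀,φ) dφ, which by integration by parts equals (1/2π) ∫₀^{2π} cos(φ−σ) ln d_U(z₀,φ) dφ. -/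
open MeasureTheory Real

/-- Distance from `z` to the boundary of `U ⊆ ℂ` along the ray in direction `e^{iφ}`. -/
noncomputable def rayDist2 (U : Set ℂ) (z : ℂ) (φ : ℝ) : ℝ :=
  sSup {t : ℝ | 0 ≤ t ∧ z + (t : ℂ) * Complex.exp (φ * Complex.I) ∈ U}

/-- The `k`-th integral mean of the distance-to-the-boundary function. -/
noncomputable def Imom2 (U : Set ℂ) (k : ℕ) (z : ℂ) : ℝ :=
  (1 / (2 * π)) * ∫ φ in (0:ℝ)..(2 * π), (rayDist2 U z φ) ^ k

/-- The variance of the distance to the boundary. -/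
noncomputable def varDist2 (U : Set ℂ) (z : ℂ) : ℝ :=
  Imom2 U 2 z - (Imom2 U 1 z) ^ 2

/-- Directional derivative of `v` at `z` in the direction `e^{iσ}`. -/
noncomputable def dirDeriv2 (v : ℂ → ℝ) (σ : ℝ) (z : ℂ) : ℝ :=
  deriv (fun t : ℝ => v (z + (t : ℂ) * Complex.exp (σ * Complex.I))) 0

/-!
Moving the base point from `z₀` to `z₀ + t e^{iσ}` moves the boundary point hit by the ray in
direction `φ`. Seen in polar coordinates about `z₀`, a point at distance `s` along the shifted ray
lies in `U` iff its modulus is below `d(z₀, ·)` at its argument; since `d(z₀, ·)` is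
differentiable this is an implicit-function situation, and comparing with the lines
`d(φ) + c t` gives `∂ₜ d(z₀ + t e^{iσ}, φ) = -cos(φ - σ) - sin(φ - σ) d'(φ) / d(φ)` at `t = 0`.
Convexity makes `d` Lipschitz in the base point, so this derivative passes under the integral,
and the `cos` term integrates to zero over a period. The second form is integration by parts
against `sin(φ - σ)`, using `(log d)' = d' / d` and the periodicity of `d`.
-/

open Filter Topology

theorem dist_add_mul_exp (z : ℂ) (t s σ : ℝ) :
    dist (z + t * Complex.exp (σ * Complex.I)) (z + s * Complex.exp (σ * Complex.I))
      = dist t s := by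
  rw [dist_add_left, dist_eq_norm, ← sub_mul, norm_mul, Complex.norm_exp_ofReal_mul_I, mul_one,
    ← Complex.ofReal_sub, Complex.norm_real, Real.dist_eq, Real.norm_eq_abs]

section RayGeometry

variable {U : Set ℂ} {z : ℂ}

theorem le_diam_of_add_mul_exp_mem (hU_bdd : Bornology.IsBounded U) (hz : z ∈ U) {φ t : ℝ}
    (ht : 0 ≤ t) (htU : z + t * Complex.exp (φ * Complex.I) ∈ U) : t ≤ Metric.diam U := by
  have := Metric.dist_le_diam_of_mem hU_bdd htU hz
  rwa [dist_eq_norm, add_sub_cancel_left, norm_mul, Complex.norm_exp_ofReal_mul_I, mul_one,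
    Complex.norm_real, Real.norm_of_nonneg ht] at this

theorem rayDist2_le_diam (hU_bdd : Bornology.IsBounded U) (hz : z ∈ U) (φ : ℝ) :
    rayDist2 U z φ ≤ Metric.diam U :=
  Real.sSup_le (fun _ ⟨ht, htU⟩ => le_diam_of_add_mul_exp_mem hU_bdd hz ht htU) Metric.diam_nonneg

theorem rayDist2_periodic (U : Set ℂ) (z : ℂ) : Function.Periodic (rayDist2 U z) (2 * π) := by
  intro φ
  simp only [rayDist2]
  push_cast
  rw [add_mul, Complex.exp_add, Complex.exp_two_pi_mul_I, mul_one]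

theorem mem_iff_lt_rayDist2 (hU_open : IsOpen U) (hU_conv : Convex ℝ U)
    (hU_bdd : Bornology.IsBounded U) (hz : z ∈ U) (φ : ℝ) {s : ℝ} (hs : 0 ≤ s) :
    z + s * Complex.exp (φ * Complex.I) ∈ U ↔ s < rayDist2 U z φ := by
  set S := {t : ℝ | 0 ≤ t ∧ z + t * Complex.exp (φ * Complex.I) ∈ U}
  have hS_bdd : BddAbove S :=
    ⟨Metric.diam U, fun _ ⟨ht, htU⟩ => le_diam_of_add_mul_exp_mem hU_bdd hz ht htU⟩
  have h0S : (0 : ℝ) ∈ S := ⟨le_rfl, by simpa using hz⟩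
  change _ ↔ s < sSup S
  constructor
  · intro hsU
    have hcont : Continuous fun t : ℝ => z + t * Complex.exp (φ * Complex.I) := by fun_prop
    obtain ⟨t, htU, hst⟩ := ((hcont.continuousAt.eventually_mem (hU_open.mem_nhds hsU)).filter_mono
      nhdsWithin_le_nhds |>.and (self_mem_nhdsWithin (s := Set.Ioi s))).exists
    exact hst.trans_le (le_csSup hS_bdd ⟨hs.trans hst.le, htU⟩)
  · intro hlt
    obtain ⟨t, ⟨ht, htU⟩, hst⟩ := exists_lt_of_lt_csSup ⟨0, h0S⟩ hlt
    have hpos : 0 < t := hs.trans_lt hst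
    have := hU_conv.add_smul_mem hz htU (t := s / t)
      (Set.mem_Icc.2 ⟨by positivity, (div_le_one hpos).2 hst.le⟩)
    convert this using 2
    have : (t : ℂ) ≠ 0 := by exact_mod_cast hpos.ne'
    rw [Complex.real_smul]
    push_cast
    field_simp

theorem rayDist2_pos (hU_open : IsOpen U) (hU_conv : Convex ℝ U)
    (hU_bdd : Bornology.IsBounded U) (hz : z ∈ U) (φ : ℝ) : 0 < rayDist2 U z φ :=
  (mem_iff_lt_rayDist2 hU_open hU_conv hU_bdd hz φ le_rfl).1 (by simpa using hz)

theorem add_mul_exp_mem_iff_norm_lt_rayDist2 (hU_open : IsOpen U) (hU_conv : Convex ℝ U)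
    (hU_bdd : Bornology.IsBounded U) (hz : z ∈ U) (w : ℂ) (φ : ℝ) :
    z + w * Complex.exp (φ * Complex.I) ∈ U ↔ ‖w‖ < rayDist2 U z (φ + w.arg) := by
  have hpolar : w * Complex.exp (φ * Complex.I)
      = ‖w‖ * Complex.exp ((φ + w.arg : ℝ) * Complex.I) := by
    conv_lhs => rw [← Complex.norm_mul_exp_arg_mul_I w]
    push_cast
    rw [add_mul, Complex.exp_add]
    ring
  rw [hpolar, mem_iff_lt_rayDist2 hU_open hU_conv hU_bdd hz _ (norm_nonneg w)]

theorem lowerSemicontinuous_rayDist2 (hU_open : IsOpen U) (hU_conv : Convex ℝ U)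
    (hU_bdd : Bornology.IsBounded U) (hz : z ∈ U) : LowerSemicontinuous (rayDist2 U z) := by
  intro φ y hy
  have hs : max y 0 < rayDist2 U z φ := max_lt hy (rayDist2_pos hU_open hU_conv hU_bdd hz φ)
  have hmem := (mem_iff_lt_rayDist2 hU_open hU_conv hU_bdd hz φ (le_max_right y 0)).2 hs
  have hcont : Continuous fun ψ : ℝ => z + (max y 0 : ℝ) * Complex.exp (ψ * Complex.I) := by
    fun_prop
  filter_upwards [hcont.continuousAt.eventually_mem (hU_open.mem_nhds hmem)] with ψ hψ
  exact (le_max_left y 0).trans_lt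
    ((mem_iff_lt_rayDist2 hU_open hU_conv hU_bdd hz ψ (le_max_right y 0)).1 hψ)

theorem one_sub_mul_rayDist2_le (hU_open : IsOpen U) (hU_conv : Convex ℝ U)
    (hU_bdd : Bornology.IsBounded U) {δ a : ℝ} (hball : Metric.ball z δ ⊆ U) {w : ℂ} (ha : 0 < a)
    (ha1 : a ≤ 1) (hw : ‖w - z‖ < a * δ) (φ : ℝ) :
    (1 - a) * rayDist2 U z φ ≤ rayDist2 U w φ := by
  have hδ : 0 < δ := pos_of_mul_pos_right ((norm_nonneg _).trans_lt hw) ha.le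
  have hz : z ∈ U := hball (Metric.mem_ball_self hδ)
  have hw' : w ∈ U := hball (by
    rw [Metric.mem_ball, dist_eq_norm]; nlinarith)
  have ha' : (a : ℂ) ≠ 0 := by exact_mod_cast ha.ne'
  -- `w + (1 - a) s e^{iφ} = (1 - a) (z + s e^{iφ}) + a (z + (w - z) / a)`, and the last point
  -- lies in `ball z δ`.
  have key : ∀ s, 0 ≤ s → s < rayDist2 U z φ → (1 - a) * s < rayDist2 U w φ := by
    intro s hs hsr
    have hzs := (mem_iff_lt_rayDist2 hU_open hU_conv hU_bdd hz φ hs).2 hsr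
    have hv : z + (a : ℂ)⁻¹ * (w - z) ∈ U := hball (by
      rw [Metric.mem_ball, dist_eq_norm, add_sub_cancel_left, norm_mul, norm_inv,
        Complex.norm_real, Real.norm_of_nonneg ha.le, inv_mul_lt_iff₀ ha]
      exact hw)
    have hcomb := hU_conv hzs hv (by linarith : 0 ≤ 1 - a) ha.le (by ring)
    rw [← mem_iff_lt_rayDist2 hU_open hU_conv hU_bdd hw' φ (by nlinarith)]
    convert hcomb using 1
    simp only [Complex.real_smul]
    push_cast
    field_simp
    ring
  by_contra! hlt
  have hrw := rayDist2_pos hU_open hU_conv hU_bdd hw' φ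
  have ha1' : 0 < 1 - a := by
    by_contra! h
    nlinarith [rayDist2_pos hU_open hU_conv hU_bdd hz φ]
  have := key (rayDist2 U w φ / (1 - a)) (by positivity) (by rwa [div_lt_iff₀' ha1'])
  rw [mul_div_cancel₀ _ ha1'.ne'] at this
  exact this.false

theorem rayDist2_sub_rayDist2_le (hU_open : IsOpen U) (hU_conv : Convex ℝ U)
    (hU_bdd : Bornology.IsBounded U) {δ : ℝ} (hball : Metric.ball z δ ⊆ U) {w : ℂ}
    (hw : ‖w - z‖ < δ / 2) (φ : ℝ) :
    rayDist2 U z φ - rayDist2 U w φ ≤ 2 * Metric.diam U / δ * ‖w - z‖ := by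
  rcases eq_or_ne w z with rfl | hwz
  · simp
  have hδ : 0 < δ := by linarith [norm_nonneg (w - z)]
  have hwz' : 0 < ‖w - z‖ := norm_pos_iff.2 (sub_ne_zero.2 hwz)
  have hz : z ∈ U := hball (Metric.mem_ball_self hδ)
  have key := one_sub_mul_rayDist2_le hU_open hU_conv hU_bdd hball (w := w) (a := 2 * ‖w - z‖ / δ)
    (by positivity) (by rw [div_le_one hδ]; linarith) (by field_simp; linarith) φ
  have hdiam := rayDist2_le_diam hU_bdd hz φ
  calc rayDist2 U z φ - rayDist2 U w φ ≤ 2 * ‖w - z‖ / δ * rayDist2 U z φ := by linarith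
    _ ≤ 2 * ‖w - z‖ / δ * Metric.diam U := by gcongr
    _ = 2 * Metric.diam U / δ * ‖w - z‖ := by ring

theorem abs_rayDist2_sub_rayDist2_le (hU_open : IsOpen U) (hU_conv : Convex ℝ U)
    (hU_bdd : Bornology.IsBounded U) {δ : ℝ} {w : ℂ} (hz : Metric.ball z δ ⊆ U)
    (hw : Metric.ball w δ ⊆ U) (hwz : ‖w - z‖ < δ / 2) (φ : ℝ) :
    |rayDist2 U w φ - rayDist2 U z φ| ≤ 2 * Metric.diam U / δ * ‖w - z‖ := by
  rw [abs_sub_le_iff]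
  constructor
  · simpa [norm_sub_rev] using
      rayDist2_sub_rayDist2_le hU_open hU_conv hU_bdd hw (w := z) (by rwa [norm_sub_rev]) φ
  · exact rayDist2_sub_rayDist2_le hU_open hU_conv hU_bdd hz hwz φ

end RayGeometry

open scoped RealInnerProductSpace in
theorem HasDerivAt.norm {F : Type*} [NormedAddCommGroup F] [InnerProductSpace ℝ F] {f : ℝ → F}
    {f' : F} {x : ℝ} (hf : HasDerivAt f f' x) (hx : f x ≠ 0) :
    HasDerivAt (fun t => ‖f t‖) (⟪f x, f'⟫ / ‖f x‖) x := by
  have := hf.norm_sq.sqrt (by positivity)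
  simp only [Real.sqrt_sq (norm_nonneg _)] at this
  convert this using 1
  field_simp

theorem HasDerivAt.arg {w : ℝ → ℂ} {w' : ℂ} {x : ℝ} (hw : HasDerivAt w w' x)
    (hx : w x ∈ Complex.slitPlane) :
    HasDerivAt (fun t => (w t).arg) (w' / w x).im x := by
  simpa only [Function.comp_def, Complex.imCLM_apply, Complex.log_im] using
    Complex.imCLM.hasFDerivAt.comp_hasDerivAt x (hw.clog_real hx)

theorem hasDerivAt_of_forall_lt_iff_neg {g : ℝ → ℝ} {L : ℝ} (H : ℝ → ℝ → ℝ)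
    (hH0 : ∀ c, H c 0 = 0) (hH : ∀ c, HasDerivAt (H c) (c - L) 0)
    (hiff : ∀ c, ∀ᶠ t in 𝓝 0, g 0 + c * t < g t ↔ H c t < 0) :
    HasDerivAt g L 0 := by
  have slope_H : ∀ c, Tendsto (fun t => H c t / t) (𝓝[≠] 0) (𝓝 (c - L)) := fun c =>
    (hasDerivAt_iff_tendsto_slope.1 (hH c)).congr fun t => by
      rw [slope_def_field, hH0, sub_zero, sub_zero]
  have lower : ∀ c < L, ∀ᶠ t in 𝓝[≠] 0, c ≤ slope g 0 t := by
    intro c hc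
    filter_upwards [(slope_H c).eventually (eventually_lt_nhds (sub_neg.2 hc)),
      (hiff c).filter_mono nhdsWithin_le_nhds, self_mem_nhdsWithin] with t hHt hiff_t ht
    rw [slope_def_field, sub_zero]
    rcases (show t ≠ 0 from ht).lt_or_gt with ht | ht
    · have hpos := mul_pos_of_neg_of_neg hHt ht
      rw [div_mul_cancel₀ _ ht.ne] at hpos
      have := mt hiff_t.1 hpos.le.not_gt
      rw [le_div_iff_of_neg ht]
      linarith
    · have hneg := mul_neg_of_neg_of_pos hHt ht
      rw [div_mul_cancel₀ _ ht.ne'] at hneg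
      have := hiff_t.2 hneg
      rw [le_div_iff₀ ht]
      linarith
  have upper : ∀ c > L, ∀ᶠ t in 𝓝[≠] 0, slope g 0 t ≤ c := by
    intro c hc
    filter_upwards [(slope_H c).eventually (eventually_gt_nhds (sub_pos.2 hc)),
      (hiff c).filter_mono nhdsWithin_le_nhds, self_mem_nhdsWithin] with t hHt hiff_t ht
    rw [slope_def_field, sub_zero]
    rcases (show t ≠ 0 from ht).lt_or_gt with ht | ht
    · have hneg := mul_neg_of_pos_of_neg hHt ht
      rw [div_mul_cancel₀ _ ht.ne] at hneg
      have := hiff_t.2 hneg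
      rw [div_le_iff_of_neg ht]
      linarith
    · have hpos := mul_pos hHt ht
      rw [div_mul_cancel₀ _ ht.ne'] at hpos
      have := mt hiff_t.1 hpos.le.not_gt
      rw [div_le_iff₀ ht]
      linarith
  rw [hasDerivAt_iff_tendsto_slope]
  refine tendsto_order.2 ⟨fun a ha => ?_, fun b hb => ?_⟩
  · filter_upwards [lower ((a + L) / 2) (by linarith)] with t ht
    linarith
  · filter_upwards [upper ((b + L) / 2) (by linarith)] with t ht
    linarith

theorem hasDerivAt_rayDist2_add_mul_exp {U : Set ℂ} (hU_open : IsOpen U) (hU_conv : Convex ℝ U)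
    (hU_bdd : Bornology.IsBounded U) {z₀ : ℂ} (hz₀ : z₀ ∈ U) (σ : ℝ) {φ : ℝ}
    (hφ : DifferentiableAt ℝ (rayDist2 U z₀) φ) :
    HasDerivAt (fun t : ℝ => rayDist2 U (z₀ + t * Complex.exp (σ * Complex.I)) φ)
      (-cos (φ - σ) - sin (φ - σ) * deriv (rayDist2 U z₀) φ / rayDist2 U z₀ φ) 0 := by
  set r := rayDist2 U z₀
  have hr₀ : 0 < r φ := rayDist2_pos hU_open hU_conv hU_bdd hz₀ φ
  set e := Complex.exp (((σ - φ : ℝ) : ℂ) * Complex.I)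
  set w : ℝ → ℝ → ℂ := fun c t => r φ + t * (c + e)
  have hw : ∀ c, HasDerivAt (w c) (c + e) 0 := fun c =>
    (((hasDerivAt_id (0 : ℝ)).ofReal_comp.mul_const (c + e)).const_add (r φ : ℂ)).congr_deriv
      (by simp)
  have hw0 : ∀ c, w c 0 = r φ := fun c => by simp [w]
  have hrot : e * Complex.exp (φ * Complex.I) = Complex.exp (σ * Complex.I) := by
    rw [← Complex.exp_add]; push_cast; ring_nf
  -- The point at distance `r φ + c t` on the ray from `z₀ + t e^{iσ}` is `z₀ + w c t e^{iφ}`;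
  -- in polar coordinates about `z₀` it lies in `U` iff `‖w c t‖ < r (φ + arg (w c t))`.
  apply hasDerivAt_of_forall_lt_iff_neg (fun c t => ‖w c t‖ - r (φ + (w c t).arg))
  · intro c
    simp [hw0, Complex.arg_ofReal_of_nonneg hr₀.le, abs_of_pos hr₀]
  · intro c
    have hslit : w c 0 ∈ Complex.slitPlane := by
      rw [hw0]; exact Complex.ofReal_mem_slitPlane.2 hr₀
    have hr' : HasDerivAt r (deriv r φ) (φ + (w c 0).arg) := by
      rw [hw0, Complex.arg_ofReal_of_nonneg hr₀.le, add_zero]; exact hφ.hasDerivAt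
    refine (((hw c).norm (hw0 c ▸ by exact_mod_cast hr₀.ne')).sub
      (hr'.comp 0 (((hw c).arg hslit).const_add φ))).congr_deriv ?_
    rw [hw0]
    have he_re : e.re = cos (φ - σ) := by rw [Complex.exp_ofReal_mul_I_re, ← cos_neg, neg_sub]
    have he_im : e.im = -sin (φ - σ) := by rw [Complex.exp_ofReal_mul_I_im, ← sin_neg, neg_sub]
    simp only [Complex.inner, Complex.conj_ofReal, Complex.norm_real, Real.norm_of_nonneg hr₀.le,
      Complex.re_mul_ofReal, Complex.div_ofReal_im, Complex.add_re, Complex.add_im,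
      Complex.ofReal_re, Complex.ofReal_im, he_re, he_im]
    field_simp
    ring
  · intro c
    have hU_t : ∀ᶠ t : ℝ in 𝓝 0, z₀ + t * Complex.exp (σ * Complex.I) ∈ U :=
      (by fun_prop : Continuous fun t : ℝ => z₀ + t * Complex.exp (σ * Complex.I)).continuousAt
        |>.eventually_mem (by simpa using hU_open.mem_nhds hz₀)
    have hs_t : ∀ᶠ t : ℝ in 𝓝 0, 0 ≤ r φ + c * t :=
      ((by fun_prop : Continuous fun t : ℝ => r φ + c * t).tendsto' 0 (r φ) (by simp)).eventually
        (eventually_gt_nhds hr₀) |>.mono fun _ h => h.le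
    filter_upwards [hU_t, hs_t] with t htU hst
    simp only [Complex.ofReal_zero, zero_mul, add_zero]
    rw [← mem_iff_lt_rayDist2 hU_open hU_conv hU_bdd htU φ hst, sub_neg,
      ← add_mul_exp_mem_iff_norm_lt_rayDist2 hU_open hU_conv hU_bdd hz₀]
    have hpoint : z₀ + t * Complex.exp (σ * Complex.I)
          + (r φ + c * t : ℝ) * Complex.exp (φ * Complex.I)
        = z₀ + w c t * Complex.exp (φ * Complex.I) := by
      simp only [w, ← hrot]
      push_cast
      ring
    rw [hpoint]

theorem hasDerivAt_integral_rayDist2_add_mul_exp {U : Set ℂ} (hU_open : IsOpen U)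
    (hU_conv : Convex ℝ U) (hU_bdd : Bornology.IsBounded U) {z₀ : ℂ} (hz₀ : z₀ ∈ U)
    (hdiff : ∀ φ, DifferentiableAt ℝ (rayDist2 U z₀) φ) (σ a b : ℝ) :
    IntervalIntegrable
      (fun φ => -cos (φ - σ) - sin (φ - σ) * deriv (rayDist2 U z₀) φ / rayDist2 U z₀ φ)
      volume a b ∧
    HasDerivAt (fun t : ℝ => ∫ φ in a..b, rayDist2 U (z₀ + t * Complex.exp (σ * Complex.I)) φ)
      (∫ φ in a..b, -cos (φ - σ) - sin (φ - σ) * deriv (rayDist2 U z₀) φ / rayDist2 U z₀ φ) 0 := by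
  obtain ⟨δ, hδ, hball⟩ := Metric.isOpen_iff.1 hU_open z₀ hz₀
  set z : ℝ → ℂ := fun t => z₀ + t * Complex.exp (σ * Complex.I)
  -- For `t, s ∈ ball 0 (δ / 8)`, `z t` and `z s` are `δ / 4`-close and both centres of balls of
  -- radius `δ / 2` inside `U`: the setting of `abs_rayDist2_sub_rayDist2_le`.
  have hball_z : ∀ t ∈ Metric.ball (0 : ℝ) (δ / 8), Metric.ball (z t) (δ / 2) ⊆ U := by
    intro t ht
    refine (Metric.ball_subset_ball' ?_).trans hball
    have : dist (z t) z₀ = dist t 0 := by simp [z]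
    rw [this]
    linarith [Metric.mem_ball.1 ht]
  have hz_mem : ∀ t ∈ Metric.ball (0 : ℝ) (δ / 8), z t ∈ U := fun t ht =>
    hball_z t ht (Metric.mem_ball_self (by positivity))
  have hr_cont : Continuous (rayDist2 U z₀) :=
    continuous_iff_continuousAt.2 fun φ => (hdiff φ).continuousAt
  have hr'_meas := measurable_deriv (rayDist2 U z₀)
  have hr_meas := hr_cont.measurable
  refine intervalIntegral.hasDerivAt_integral_of_dominated_loc_of_lip (Metric.ball_mem_nhds 0
    (by positivity : 0 < δ / 8)) (bound := fun _ => 2 * Metric.diam U / (δ / 2)) ?_ ?_ ?_ ?_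
    intervalIntegrable_const ?_
  · filter_upwards [Metric.ball_mem_nhds (0 : ℝ) (by positivity : 0 < δ / 8)] with t ht
    exact (lowerSemicontinuous_rayDist2 hU_open hU_conv hU_bdd (hz_mem t ht)).measurable
      |>.aestronglyMeasurable
  · simpa using hr_cont.intervalIntegrable a b
  · exact Measurable.aestronglyMeasurable (by fun_prop)
  · refine ae_of_all _ fun φ _ => LipschitzOnWith.of_dist_le_mul fun t ht s hs => ?_
    have hts : dist (z t) (z s) < δ / 2 / 2 := by
      rw [dist_add_mul_exp]
      linarith [dist_triangle_right t s 0, Metric.mem_ball.1 ht, Metric.mem_ball.1 hs]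
    have := abs_rayDist2_sub_rayDist2_le hU_open hU_conv hU_bdd (hball_z s hs) (hball_z t ht)
      (by rwa [← dist_eq_norm]) φ
    rw [← dist_eq_norm, dist_add_mul_exp] at this
    rwa [Real.coe_nnabs, Real.dist_eq, abs_of_nonneg
      (div_nonneg (mul_nonneg zero_le_two Metric.diam_nonneg) (by positivity))]
  · exact ae_of_all _ fun φ _ =>
      hasDerivAt_rayDist2_add_mul_exp hU_open hU_conv hU_bdd hz₀ σ (hdiff φ)

theorem integral_cos_sub_zero_two_pi (σ : ℝ) : ∫ φ in (0 : ℝ)..(2 * π), cos (φ - σ) = 0 := by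
  simp [intervalIntegral.integral_comp_sub_right (fun x => cos x) σ]

theorem integral_sin_sub_mul_deriv_div {f : ℝ → ℝ} (hf : ∀ φ, DifferentiableAt ℝ f φ)
    (hpos : ∀ φ, 0 < f φ) (hper : Function.Periodic f (2 * π)) (σ : ℝ)
    (hint : IntervalIntegrable (fun φ => sin (φ - σ) * deriv f φ / f φ)
      volume 0 (2 * π)) :
    ∫ φ in (0 : ℝ)..(2 * π), sin (φ - σ) * deriv f φ / f φ
      = -∫ φ in (0 : ℝ)..(2 * π), cos (φ - σ) * log (f φ) := by
  have hderiv : ∀ x, HasDerivAt (fun φ => sin (φ - σ) * log (f φ))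
      (cos (x - σ) * log (f x) + sin (x - σ) * deriv f x / f x) x := fun x =>
    (((hasDerivAt_id x).sub_const σ).sin.mul ((hf x).hasDerivAt.log (hpos x).ne')).congr_deriv
      (by simp only [id]; ring)
  have hcont : Continuous fun φ => cos (φ - σ) * log (f φ) :=
    (continuous_cos.comp (continuous_id.sub continuous_const)).mul
      ((continuous_iff_continuousAt.2 fun φ => (hf φ).continuousAt).log fun φ => (hpos φ).ne')
  have hFTC := intervalIntegral.integral_eq_sub_of_hasDerivAt (fun x _ => hderiv x)
    ((hcont.intervalIntegrable _ _).add hint)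
  rw [intervalIntegral.integral_add (hcont.intervalIntegrable _ _) hint, ← zero_add (2 * π),
    hper 0, zero_add, sin_two_pi_sub, zero_sub, sin_neg] at hFTC
  linarith

theorem dirDeriv_I1_formula_general (U : Set ℂ) (hU_open : IsOpen U) (hU_conv : Convex ℝ U)
    (hU_bdd : Bornology.IsBounded U) (z₀ : ℂ) (hz₀ : z₀ ∈ U)
    (hdiff : ∀ φ : ℝ, DifferentiableAt ℝ (rayDist2 U z₀) φ) (σ : ℝ) :
    dirDeriv2 (Imom2 U 1) σ z₀
        = -(1 / (2 * π)) * ∫ φ in (0:ℝ)..(2 * π),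
            sin (φ - σ) * deriv (rayDist2 U z₀) φ / rayDist2 U z₀ φ ∧
      -(1 / (2 * π)) * (∫ φ in (0:ℝ)..(2 * π),
            sin (φ - σ) * deriv (rayDist2 U z₀) φ / rayDist2 U z₀ φ)
        = (1 / (2 * π)) * ∫ φ in (0:ℝ)..(2 * π), cos (φ - σ) * Real.log (rayDist2 U z₀ φ) := by
  obtain ⟨hint, hderiv⟩ :=
    hasDerivAt_integral_rayDist2_add_mul_exp hU_open hU_conv hU_bdd hz₀ hdiff σ 0 (2 * π)
  have hcos_int : IntervalIntegrable (fun φ => -cos (φ - σ)) volume 0 (2 * π) :=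
    Continuous.intervalIntegrable (by fun_prop) _ _
  have hquot_int : IntervalIntegrable
      (fun φ => sin (φ - σ) * deriv (rayDist2 U z₀) φ / rayDist2 U z₀ φ)
      volume 0 (2 * π) := by
    convert hcos_int.sub hint using 1
    ext φ
    ring
  constructor
  · simp only [dirDeriv2, Imom2, pow_one]
    rw [(hderiv.const_mul (1 / (2 * π))).deriv, intervalIntegral.integral_sub hcos_int hquot_int,
      intervalIntegral.integral_neg, integral_cos_sub_zero_two_pi]
    ring
  · rw [integral_sin_sub_mul_deriv_div hdiff (rayDist2_pos hU_open hU_conv hU_bdd hz₀)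
      (rayDist2_periodic U z₀) σ hquot_int]
    ring

/-- Explicit formula for the directional derivative of the average distance to the
boundary, in two equivalent forms. -/
theorem dirDeriv_I1_formula (U : Set ℂ) (hU_open : IsOpen U) (hU_conv : Convex ℝ U)
    (hU_bdd : Bornology.IsBounded U) (hU_ne : U.Nonempty) (z₀ : ℂ) (hz₀ : z₀ ∈ U)
    (hdiff : ∀ φ : ℝ, DifferentiableAt ℝ (rayDist2 U z₀) φ) (σ : ℝ) :
    dirDeriv2 (Imom2 U 1) σ z₀
        = -(1 / (2 * π)) * ∫ φ in (0:ℝ)..(2 * π),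
            sin (φ - σ) * deriv (rayDist2 U z₀) φ / rayDist2 U z₀ φ ∧
      -(1 / (2 * π)) * (∫ φ in (0:ℝ)..(2 * π),
            sin (φ - σ) * deriv (rayDist2 U z₀) φ / rayDist2 U z₀ φ)
        = (1 / (2 * π)) * ∫ φ in (0:ℝ)..(2 * π), cos (φ - σ) * Real.log (rayDist2 U z₀ φ) :=
  dirDeriv_I1_formula_general U hU_open hU_conv hU_bdd z₀ hz₀ hdiff σ
end

section
/- Let D be the open unit disk in R² (viewed as C). For z ∈ D, the variance of the distance to the boundary is v_D(z) = 1 − 4E(|z|)²/π², where E is the complete elliptic integral of the second kind. In particular v_D(0) = 0. -/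
open MeasureTheory Real

/-- The complete elliptic integral of the second kind. -/
noncomputable def ellipticE (k : ℝ) : ℝ :=
  ∫ θ in (0:ℝ)..(π / 2), Real.sqrt (1 - k ^ 2 * (sin θ) ^ 2)

/-- The complete elliptic integral of the first kind. -/
noncomputable def ellipticK (k : ℝ) : ℝ :=
  ∫ θ in (0:ℝ)..(π / 2), 1 / Real.sqrt (1 - k ^ 2 * (sin θ) ^ 2)

/-! The ray from `z` (with `r = ‖z‖`) in direction `φ` leaves the unit disk at the positive root of
`t² + 2 r cos ψ t + r² - 1`, `ψ = φ - arg z`, i.e. after `d = -r cos ψ + √(1 - r² sin² ψ)`.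
Over a full period the `cos` term integrates to `0`, and the symmetries of `sin²` reduce the square
root to `4 E(r)`, so `I₁ = 2E(r)/π`. In `d² = 1 + r² (cos² ψ - sin² ψ) - 2 r cos ψ √(1 - r² sin² ψ)`
the last term integrates to `0` under the substitution `u = sin ψ`, so `I₂ = 1`. -/

theorem setOf_nonneg_and_quadratic_neg {b c : ℝ} (hc : c < 0) :
    {t : ℝ | 0 ≤ t ∧ t ^ 2 + 2 * b * t + c < 0} = Set.Ico 0 (-b + √(b ^ 2 - c)) := by
  have hb : -√(b ^ 2 - c) < b := Real.neg_sqrt_lt_of_sq_lt (by linarith)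
  ext t
  simp only [Set.mem_ofPred_eq, Set.mem_Ico, and_congr_right_iff]
  intro ht
  have hsq : t ^ 2 + 2 * b * t + c < 0 ↔ (t + b) ^ 2 < b ^ 2 - c := by
    constructor <;> intro h <;> nlinarith
  rw [hsq, Real.sq_lt]
  constructor
  · rintro ⟨-, h⟩; linarith
  · intro h; constructor <;> linarith

theorem Complex.norm_add_ofReal_mul_exp_sq (z : ℂ) (t φ : ℝ) :
    ‖z + t * exp (φ * I)‖ ^ 2 = t ^ 2 + 2 * (‖z‖ * Real.cos (φ - arg z)) * t + ‖z‖ ^ 2 := by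
  have hre := norm_mul_cos_arg z
  have him := norm_mul_sin_arg z
  have hnorm : ‖z‖ ^ 2 = z.re * z.re + z.im * z.im := by rw [Complex.sq_norm, normSq_apply]
  rw [Complex.sq_norm, normSq_apply, Real.cos_sub]
  simp only [exp_mul_I, add_re, add_im, mul_re, mul_im, ofReal_re, ofReal_im, I_re, I_im,
    cos_ofReal_re, cos_ofReal_im, sin_ofReal_re, sin_ofReal_im]
  linear_combination (-2 * t * Real.cos φ) * hre - 2 * t * Real.sin φ * him - hnorm
    + t ^ 2 * Real.sin_sq_add_cos_sq φ

theorem rayDist2_ball_zero {R : ℝ} {z : ℂ} (hz : ‖z‖ < R) (φ : ℝ) :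
    rayDist2 (Metric.ball 0 R) z φ =
      -(‖z‖ * cos (φ - z.arg)) + √(R ^ 2 - ‖z‖ ^ 2 * sin (φ - z.arg) ^ 2) := by
  have hR : 0 ≤ R := (norm_nonneg z).trans hz.le
  set b := ‖z‖ * cos (φ - z.arg)
  have hc : ‖z‖ ^ 2 - R ^ 2 < 0 := by nlinarith [norm_nonneg z]
  have hmem (t : ℝ) : z + t * Complex.exp (φ * Complex.I) ∈ Metric.ball 0 R ↔
      t ^ 2 + 2 * b * t + (‖z‖ ^ 2 - R ^ 2) < 0 := by
    rw [mem_ball_zero_iff, ← pow_lt_pow_iff_left₀ (norm_nonneg _) hR two_ne_zero,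
      Complex.norm_add_ofReal_mul_exp_sq, ← sub_neg, add_sub_assoc]
  have hroot : b < √(b ^ 2 - (‖z‖ ^ 2 - R ^ 2)) := Real.lt_sqrt_of_sq_lt (by linarith)
  simp only [rayDist2, hmem]
  rw [setOf_nonneg_and_quadratic_neg hc, csSup_Ico (by linarith)]
  congr 2
  linear_combination ‖z‖ ^ 2 * sin_sq_add_cos_sq (φ - z.arg)

theorem Function.Periodic.intervalIntegral_comp_sub_right {E : Type*} [NormedAddCommGroup E]
    [NormedSpace ℝ E] {f : ℝ → E} {T : ℝ} (hf : Periodic f T) (a : ℝ) :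
    ∫ x in 0..T, f (x - a) = ∫ x in 0..T, f x := by
  rw [intervalIntegral.integral_comp_sub_right, zero_sub, sub_eq_neg_add,
    hf.intervalIntegral_add_eq (-a) 0, zero_add]

theorem integral_comp_sin_sq_zero_two_pi {g : ℝ → ℝ} (hg : Continuous g) :
    ∫ x in 0..2 * π, g (sin x ^ 2) = 4 * ∫ x in 0..π / 2, g (sin x ^ 2) := by
  set f : ℝ → ℝ := fun x => g (sin x ^ 2)
  have hint (a b : ℝ) : IntervalIntegrable f volume a b := by
    apply Continuous.intervalIntegrable; fun_prop
  have hper : Function.Periodic f π := fun x => by simp [f, sin_add_pi]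
  have hsymm : ∫ x in π / 2..π, f x = ∫ x in 0..π / 2, f x := by
    calc ∫ x in π / 2..π, f x = ∫ x in π / 2..π, f (π - x) := by simp [f, sin_pi_sub]
      _ = ∫ x in 0..π / 2, f x := by
        rw [intervalIntegral.integral_comp_sub_left]; norm_num [sub_half]
  have hsecond : ∫ x in π..2 * π, f x = ∫ x in 0..π, f x := by
    simpa [two_mul] using hper.intervalIntegral_add_eq π 0
  rw [← intervalIntegral.integral_add_adjacent_intervals (hint 0 π) (hint π (2 * π)), hsecond,
    ← intervalIntegral.integral_add_adjacent_intervals (hint 0 (π / 2)) (hint (π / 2) π), hsymm]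
  ring

theorem integral_cos_mul_comp_sin_zero_two_pi {g : ℝ → ℝ} (hg : Continuous g) :
    ∫ x in 0..2 * π, cos x * g (sin x) = 0 := by
  have := intervalIntegral.integral_comp_mul_deriv (a := 0) (b := 2 * π)
    (fun x _ => hasDerivAt_sin x) continuous_cos.continuousOn hg
  rw [sin_zero, sin_two_pi, intervalIntegral.integral_same] at this
  simpa [mul_comm] using this

theorem integral_sqrt_one_sub_sq_mul_sin_sq (k : ℝ) :
    ∫ x in 0..2 * π, √(1 - k ^ 2 * sin x ^ 2) = 4 * ellipticE k :=
  integral_comp_sin_sq_zero_two_pi (g := fun s => √(1 - k ^ 2 * s)) (by fun_prop)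

noncomputable def unitDiskRayDist (r ψ : ℝ) : ℝ := -(r * cos ψ) + √(1 - r ^ 2 * sin ψ ^ 2)

theorem integral_unitDiskRayDist (r : ℝ) :
    ∫ ψ in 0..2 * π, unitDiskRayDist r ψ = 4 * ellipticE r := by
  unfold unitDiskRayDist
  rw [intervalIntegral.integral_add (by apply Continuous.intervalIntegrable; fun_prop)
      (by apply Continuous.intervalIntegrable; fun_prop),
    integral_sqrt_one_sub_sq_mul_sin_sq, intervalIntegral.integral_neg,
    intervalIntegral.integral_const_mul, integral_cos, sin_two_pi, sin_zero]
  ring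

theorem integral_unitDiskRayDist_sq {r : ℝ} (hr : r ^ 2 ≤ 1) :
    ∫ ψ in 0..2 * π, unitDiskRayDist r ψ ^ 2 = 2 * π := by
  have hexpand (ψ : ℝ) : unitDiskRayDist r ψ ^ 2 =
      (1 + r ^ 2 * (cos ψ ^ 2 - sin ψ ^ 2)) - 2 * r * (cos ψ * √(1 - r ^ 2 * sin ψ ^ 2)) := by
    have hsq : √(1 - r ^ 2 * sin ψ ^ 2) ^ 2 = 1 - r ^ 2 * sin ψ ^ 2 :=
      Real.sq_sqrt (by nlinarith [sin_sq_le_one ψ])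
    rw [unitDiskRayDist]
    linear_combination hsq
  simp only [hexpand]
  rw [intervalIntegral.integral_sub (by apply Continuous.intervalIntegrable; fun_prop)
      (by apply Continuous.intervalIntegrable; fun_prop),
    intervalIntegral.integral_add intervalIntegrable_const
      (by apply Continuous.intervalIntegrable; fun_prop),
    intervalIntegral.integral_const_mul, intervalIntegral.integral_const_mul,
    integral_cos_sq_sub_sin_sq,
    integral_cos_mul_comp_sin_zero_two_pi (g := fun s => √(1 - r ^ 2 * s ^ 2)) (by fun_prop)]
  simp

theorem integral_rayDist2_unitDisk_pow {z : ℂ} (hz : ‖z‖ < 1) (k : ℕ) :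
    ∫ φ in 0..2 * π, rayDist2 (Metric.ball 0 1) z φ ^ k =
      ∫ ψ in 0..2 * π, unitDiskRayDist ‖z‖ ψ ^ k := by
  have hray (φ : ℝ) : rayDist2 (Metric.ball 0 1) z φ = unitDiskRayDist ‖z‖ (φ - z.arg) := by
    simpa [unitDiskRayDist] using rayDist2_ball_zero hz φ
  have hper : Function.Periodic (fun ψ => unitDiskRayDist ‖z‖ ψ ^ k) (2 * π) := fun ψ => by
    simp [unitDiskRayDist, cos_add_two_pi, sin_add_two_pi]
  simp only [hray]
  exact hper.intervalIntegral_comp_sub_right z.arg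

theorem Imom2_one_unitDisk {z : ℂ} (hz : ‖z‖ < 1) :
    Imom2 (Metric.ball 0 1) 1 z = 2 * ellipticE ‖z‖ / π := by
  rw [Imom2, integral_rayDist2_unitDisk_pow hz]
  simp only [pow_one]
  rw [integral_unitDiskRayDist]
  field_simp
  ring

theorem Imom2_two_unitDisk {z : ℂ} (hz : ‖z‖ < 1) : Imom2 (Metric.ball 0 1) 2 z = 1 := by
  have hr : ‖z‖ ^ 2 ≤ 1 := by nlinarith [norm_nonneg z]
  rw [Imom2, integral_rayDist2_unitDisk_pow hz, integral_unitDiskRayDist_sq hr]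
  field_simp

theorem ellipticE_zero : ellipticE 0 = π / 2 := by
  simp [ellipticE]

/-- The variance of the distance to the boundary for the unit disk. -/
theorem varDist2_unitDisk (z : ℂ) (hz : z ∈ Metric.ball (0 : ℂ) 1) :
    varDist2 (Metric.ball (0 : ℂ) 1) z = 1 - 4 * (ellipticE ‖z‖) ^ 2 / π ^ 2 ∧
      varDist2 (Metric.ball (0 : ℂ) 1) 0 = 0 := by
  have hvar {w : ℂ} (hw : ‖w‖ < 1) :
      varDist2 (Metric.ball 0 1) w = 1 - 4 * ellipticE ‖w‖ ^ 2 / π ^ 2 := by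
    rw [varDist2, Imom2_one_unitDisk hw, Imom2_two_unitDisk hw]
    ring
  refine ⟨hvar (mem_ball_zero_iff.mp hz), ?_⟩
  rw [hvar (by simp), norm_zero, ellipticE_zero]
  field_simp
  ring
end

section
/- Let U be a bounded convex domain in R², z₀ ∈ U with r = d(z₀,∂U) and w = z₀ + r e^{iσ} ∈ ∂U, and z_δ = (1−δ)w + δz₀ for δ ∈ (0,1). Then for every angle φ with |φ − σ| < π/2, d_U(z_δ, φ) ≤ δr / cos(φ − σ), and for |φ − σ| < π/2, d_U(z_δ, φ + π) ≥ r√(2δ − δ²). -/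
open MeasureTheory Real

/-!
The ball `B(z₀, r)` lies in `U` and touches `∂U` at `w`, so the supporting line of the convex
set `U` at `w` is orthogonal to `e^{iσ}`: `U` lies in the open half-plane
`⟪e^{iσ}, u - w⟫ < 0`. The point `z_δ = w - δ r e^{iσ}` sits at depth `δ r` below that line,
which bounds every forward ray. Backwards, `z_δ - z₀ = (1 - δ) r e^{iσ}` and
`((1 - δ) r)² + (r √(2δ - δ²))² = r²`, so the ray of that length in direction `e^{i(φ+π)}`,
which makes an acute angle with `-e^{iσ}`, stays inside `B(z₀, r)`.
-/

open Metric RealInnerProductSpace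

theorem Metric.ball_infDist_frontier_subset {E : Type*} [NormedAddCommGroup E] [NormedSpace ℝ E]
    {U : Set E} (hU : IsOpen U) {x : E} (hx : x ∈ U) :
    ball x (infDist x (frontier U)) ⊆ U := by
  rcases (ball x (infDist x (frontier U))).eq_empty_or_nonempty with hempty | hne
  · exact hempty ▸ Set.empty_subset U
  refine (convex_ball _ _).isPreconnected.subset_left_of_subset_union hU
    isClosed_closure.isOpen_compl (Set.disjoint_compl_right_iff_subset.mpr subset_closure)
    (fun y hy => ?_) ⟨x, mem_ball_self (nonempty_ball.mp hne), hx⟩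
  by_cases hyc : y ∈ closure U
  · rw [closure_eq_self_union_frontier] at hyc
    exact .inl (hyc.resolve_right (Set.disjoint_left.mp disjoint_ball_infDist hy))
  · exact .inr hyc

section InnerProductSpace

variable {E : Type*} [NormedAddCommGroup E] [InnerProductSpace ℝ E]

theorem Convex.inner_sub_neg_of_ball_subset [CompleteSpace E] {U : Set E} (hU_open : IsOpen U)
    (hU_conv : Convex ℝ U) {z₀ v : E} {r : ℝ} (hr : 0 < r) (hv : ‖v‖ = 1)
    (hball : ball z₀ r ⊆ U) (hw : z₀ + r • v ∉ U) {u : E} (hu : u ∈ U) :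
    ⟪v, u - (z₀ + r • v)⟫ < 0 := by
  obtain ⟨f, hf⟩ := geometric_hahn_banach_open_point hU_conv hU_open hw
  obtain ⟨a, hfa⟩ : ∃ a : E, ∀ x, f x = ⟪a, x⟫ :=
    ⟨_, fun _ => InnerProductSpace.toDual_symm_apply.symm⟩
  simp only [hfa] at hf
  have hclosedBall : closedBall z₀ r ⊆ {x | ⟪a, x⟫ ≤ ⟪a, z₀ + r • v⟫} := by
    rw [← closure_ball z₀ hr.ne']
    exact closure_minimal (fun x hx => (hf x (hball hx)).le)
      (isClosed_le (by fun_prop) (by fun_prop))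
  have hnorm_le : ‖a‖ ≤ ⟪a, v⟫ := by
    rcases eq_or_ne a 0 with rfl | ha0
    · simp
    have hna : ‖a‖ ≠ 0 := norm_ne_zero_iff.mpr ha0
    have hmem : z₀ + r • (‖a‖⁻¹ • a) ∈ closedBall z₀ r := by
      rw [mem_closedBall, dist_eq_norm, add_sub_cancel_left, norm_smul, norm_smul, norm_inv,
        norm_norm, inv_mul_cancel₀ hna, Real.norm_of_nonneg hr.le, mul_one]
    have key : ⟪a, z₀⟫ + r * ‖a‖ ≤ ⟪a, z₀⟫ + r * ⟪a, v⟫ := by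
      have := hclosedBall hmem
      rwa [Set.mem_ofPred_eq, inner_add_right, inner_add_right, inner_smul_right,
        inner_smul_right, inner_smul_right, real_inner_self_eq_norm_sq, sq,
        inv_mul_cancel_left₀ hna] at this
    exact le_of_mul_le_mul_left (by linarith) hr
  -- equality in Cauchy–Schwarz: the separating functional is a positive multiple of `⟪v, ·⟫`
  have ha : a = ‖a‖ • v := by
    have := inner_eq_norm_mul_iff_real.mp
      (le_antisymm (real_inner_le_norm a v) (by rwa [hv, mul_one]))
    rwa [hv, one_smul] at this
  have := hf u hu
  rw [ha, ← sub_neg, ← inner_sub_right, real_inner_smul_left] at this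
  exact neg_of_mul_neg_right this (norm_nonneg a)

theorem norm_smul_sub_smul_lt {v v' : E} (hv : ‖v‖ = 1) (hv' : ‖v'‖ = 1) (hvv' : 0 < ⟪v, v'⟫)
    {a b r : ℝ} (ha : 0 < a) (hb : 0 < b) (hr : 0 ≤ r) (habr : a ^ 2 + b ^ 2 = r ^ 2) :
    ‖a • v - b • v'‖ < r := by
  have hsq : ‖a • v - b • v'‖ ^ 2 = r ^ 2 - 2 * a * b * ⟪v, v'⟫ := by
    rw [norm_sub_sq_real, norm_smul, norm_smul, inner_smul_left, inner_smul_right, hv, hv',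
      Real.norm_of_nonneg ha.le, Real.norm_of_nonneg hb.le, ← habr]
    simp only [conj_trivial]
    ring
  exact lt_of_pow_lt_pow_left₀ 2 hr (by rw [hsq]; nlinarith [mul_pos (mul_pos ha hb) hvv'])

end InnerProductSpace

theorem Complex.inner_exp_ofReal_mul_I (σ φ : ℝ) :
    ⟪Complex.exp (σ * Complex.I), Complex.exp (φ * Complex.I)⟫ = Real.cos (φ - σ) := by
  rw [Complex.inner, ← Complex.exp_conj, ← Complex.exp_add, ← Complex.exp_ofReal_mul_I_re]
  congr 2
  simp only [map_mul, Complex.conj_ofReal, Complex.conj_I]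
  push_cast
  ring

theorem rayDist2_le {U : Set ℂ} {z : ℂ} {φ b : ℝ} (hb : 0 ≤ b)
    (h : ∀ t : ℝ, 0 ≤ t → z + t * Complex.exp (φ * Complex.I) ∈ U → t ≤ b) :
    rayDist2 U z φ ≤ b :=
  Real.sSup_le (fun t ht => h t ht.1 ht.2) hb

theorem le_rayDist2 {U : Set ℂ} (hU : Bornology.IsBounded U) {z : ℂ} {φ t : ℝ} (ht : 0 ≤ t)
    (hmem : z + t * Complex.exp (φ * Complex.I) ∈ U) : t ≤ rayDist2 U z φ := by
  obtain ⟨R, hR⟩ := hU.subset_closedBall z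
  refine le_csSup ⟨R, fun s ⟨hs, hsU⟩ => ?_⟩ ⟨ht, hmem⟩
  simpa [dist_eq_norm, abs_of_nonneg hs] using hR hsU

theorem rayDist2_le_div_cos {U : Set ℂ} {w : ℂ} {σ φ h : ℝ}
    (hU : ∀ u ∈ U, ⟪Complex.exp (σ * Complex.I), u - w⟫ < 0) (hh : 0 ≤ h)
    (hcos : 0 < cos (φ - σ)) :
    rayDist2 U (w - h * Complex.exp (σ * Complex.I)) φ ≤ h / cos (φ - σ) := by
  refine rayDist2_le (div_nonneg hh hcos.le) fun t _ ht => ?_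
  have := hU _ ht
  rw [show w - h * Complex.exp (σ * Complex.I) + t * Complex.exp (φ * Complex.I) - w
      = t • Complex.exp (φ * Complex.I) - h • Complex.exp (σ * Complex.I) by
        simp only [Complex.real_smul]; ring,
    inner_sub_right, inner_smul_right, inner_smul_right, Complex.inner_exp_ofReal_mul_I,
    real_inner_self_eq_norm_sq, Complex.norm_exp_ofReal_mul_I] at this
  rw [le_div_iff₀ hcos]
  linarith

theorem le_rayDist2_add_pi {U : Set ℂ} (hU : Bornology.IsBounded U) {z₀ : ℂ} {r a b σ φ : ℝ}
    (hball : ball z₀ r ⊆ U) (hr : 0 ≤ r) (ha : 0 < a) (hb : 0 < b)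
    (habr : a ^ 2 + b ^ 2 = r ^ 2) (hcos : 0 < cos (φ - σ)) :
    b ≤ rayDist2 U (z₀ + a * Complex.exp (σ * Complex.I)) (φ + π) := by
  refine le_rayDist2 hU hb.le (hball ?_)
  have hexp : Complex.exp ((φ + π : ℝ) * Complex.I) = -Complex.exp (φ * Complex.I) := by
    push_cast
    rw [add_mul, Complex.exp_add, Complex.exp_pi_mul_I, mul_neg_one]
  rw [mem_ball, dist_eq_norm, hexp, show z₀ + a * Complex.exp (σ * Complex.I)
      + b * -Complex.exp (φ * Complex.I) - z₀
      = a • Complex.exp (σ * Complex.I) - b • Complex.exp (φ * Complex.I) by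
        simp only [Complex.real_smul]; ring]
  exact norm_smul_sub_smul_lt (Complex.norm_exp_ofReal_mul_I σ) (Complex.norm_exp_ofReal_mul_I φ)
    (by rwa [Complex.inner_exp_ofReal_mul_I]) ha hb hr habr

theorem rayDist2_bounds_near_boundary_general (U : Set ℂ) (hU_open : IsOpen U)
    (hU_conv : Convex ℝ U) (hU_bdd : Bornology.IsBounded U)
    (z₀ : ℂ) (hz₀ : z₀ ∈ U) (σ : ℝ) (r : ℝ) (hr : r = Metric.infDist z₀ (frontier U))
    (w : ℂ) (hw : w = z₀ + (r : ℂ) * Complex.exp (σ * Complex.I)) (hwb : w ∈ frontier U)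
    (δ : ℝ) (hδ : δ ∈ Set.Ioo (0:ℝ) 1) (φ : ℝ) (hφ : |φ - σ| < π / 2) :
    rayDist2 U ((1 - (δ:ℂ)) * w + (δ:ℂ) * z₀) φ ≤ δ * r / cos (φ - σ) ∧
      rayDist2 U ((1 - (δ:ℂ)) * w + (δ:ℂ) * z₀) (φ + π) ≥ r * Real.sqrt (2 * δ - δ ^ 2) := by
  obtain ⟨hδ0, hδ1⟩ := hδ
  have hcos : 0 < cos (φ - σ) :=
    cos_pos_of_mem_Ioo ⟨by linarith [(abs_lt.mp hφ).1], (abs_lt.mp hφ).2⟩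
  have hU_frontier : Disjoint (frontier U) U := disjoint_frontier_iff_isOpen.mpr hU_open
  have hr0 : 0 < r :=
    hr ▸ (isClosed_frontier.notMem_iff_infDist_pos ⟨w, hwb⟩).mp
      (Set.disjoint_right.mp hU_frontier hz₀)
  have hball : ball z₀ r ⊆ U := hr ▸ ball_infDist_frontier_subset hU_open hz₀
  have hw' : w = z₀ + r • Complex.exp (σ * Complex.I) := by rw [hw, Complex.real_smul]
  constructor
  · have hsupport (u : ℂ) (hu : u ∈ U) : ⟪Complex.exp (σ * Complex.I), u - w⟫ < 0 :=
      hw' ▸ hU_conv.inner_sub_neg_of_ball_subset hU_open hr0 (Complex.norm_exp_ofReal_mul_I σ)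
        hball (hw' ▸ Set.disjoint_left.mp hU_frontier hwb) hu
    rw [show (1 - (δ:ℂ)) * w + δ * z₀ = w - (δ * r : ℝ) * Complex.exp (σ * Complex.I) by
      rw [hw]; push_cast; ring]
    exact rayDist2_le_div_cos hsupport (by positivity) hcos
  · rw [show (1 - (δ:ℂ)) * w + δ * z₀ = z₀ + ((1 - δ) * r : ℝ) * Complex.exp (σ * Complex.I) by
      rw [hw]; push_cast; ring]
    have h2δ : 0 < 2 * δ - δ ^ 2 := by nlinarith
    exact le_rayDist2_add_pi hU_bdd hball hr0.le (by nlinarith) (by positivity)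
      (by rw [mul_pow, mul_pow, sq_sqrt h2δ.le]; ring) hcos

/-- Geometric bounds on the distance to the boundary from a point near the boundary. -/
theorem rayDist2_bounds_near_boundary (U : Set ℂ) (hU_open : IsOpen U)
    (hU_conv : Convex ℝ U) (hU_bdd : Bornology.IsBounded U) (hU_ne : U.Nonempty)
    (z₀ : ℂ) (hz₀ : z₀ ∈ U) (σ : ℝ) (r : ℝ) (hr : r = Metric.infDist z₀ (frontier U))
    (w : ℂ) (hw : w = z₀ + (r : ℂ) * Complex.exp (σ * Complex.I)) (hwb : w ∈ frontier U)
    (δ : ℝ) (hδ : δ ∈ Set.Ioo (0:ℝ) 1) (φ : ℝ) (hφ : |φ - σ| < π / 2) :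
    rayDist2 U ((1 - (δ:ℂ)) * w + (δ:ℂ) * z₀) φ ≤ δ * r / cos (φ - σ) ∧
      rayDist2 U ((1 - (δ:ℂ)) * w + (δ:ℂ) * z₀) (φ + π) ≥ r * Real.sqrt (2 * δ - δ ^ 2) :=
  rayDist2_bounds_near_boundary_general U hU_open hU_conv hU_bdd z₀ hz₀ σ r hr w hw hwb δ hδ φ hφ
end

section
/- Let B³ be the open unit ball in R³ and x a point with |x| = r, 0 ≤ r < 1. Then the mean squared distance to the boundary is I_2^{B³}(x) = 1 − r²/3. -/
open MeasureTheory Metric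

/-! Along the ray from `x` in direction `σ` the distance to the unit sphere is `d = -a + √(c + a²)`
with `a = ⟪x, σ⟫` and `c = 1 - ‖x‖²`, so `d² = 2a² + c - 2a√(c + a²)`. The last term is odd in `σ`
and averages to zero. The surface measure is invariant under linear isometries, so the mean of
`⟪x, σ⟫²` depends only on `‖x‖`, and summing over an orthonormal basis shows that it is `‖x‖² / n`.
Hence the mean of `d²` is `1 - (1 - 2 / n) ‖x‖²`. -/

open Set
open scoped RealInnerProductSpace Pointwise

theorem Set.smul_preimage_linearEquiv {R M N : Type*} [Semiring R] [AddCommMonoid M]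
    [AddCommMonoid N] [Module R M] [Module R N] (e : M ≃ₗ[R] N) (s : Set R) (A : Set N) :
    s • (e ⁻¹' A) = e ⁻¹' (s • A) := by
  ext y
  simp only [mem_smul, mem_preimage]
  constructor
  · rintro ⟨t, ht, a, ha, rfl⟩
    exact ⟨t, ht, e a, ha, by simp⟩
  · rintro ⟨t, ht, a, ha, hy⟩
    exact ⟨t, ht, e.symm a, by simpa using ha, by simpa using congrArg e.symm hy⟩

section NormedSpace

variable {E : Type*} [NormedAddCommGroup E] [NormedSpace ℝ E]

def LinearIsometryEquiv.sphereHomeomorph (R : E ≃ₗᵢ[ℝ] E) :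
    sphere (0 : E) 1 ≃ₜ sphere (0 : E) 1 :=
  R.toHomeomorph.subtype fun x => by simp

theorem MeasureTheory.MeasurePreserving.sphereHomeomorph [MeasurableSpace E]
    [BorelSpace E] {μ : Measure E} {R : E ≃ₗᵢ[ℝ] E} (hR : MeasurePreserving R μ μ) :
    MeasurePreserving R.sphereHomeomorph μ.toSphere μ.toSphere := by
  have hmeas := R.sphereHomeomorph.continuous.measurable
  refine ⟨hmeas, Measure.ext fun s hs => ?_⟩
  have hval : ((↑) '' (R.sphereHomeomorph ⁻¹' s) : Set E) = R ⁻¹' ((↑) '' s) := by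
    rw [← Homeomorph.image_symm, image_image, ← R.symm_symm, ← R.symm.image_eq_preimage_symm,
      image_image]
    rfl
  rw [Measure.map_apply hmeas hs, Measure.toSphere_apply' _ (hmeas hs),
    Measure.toSphere_apply' _ hs, hval, ← R.coe_toLinearEquiv, Set.smul_preimage_linearEquiv,
    R.coe_toLinearEquiv]
  exact congrArg _
    ((show MeasurePreserving R.toHomeomorph.toMeasurableEquiv μ μ from hR).measure_preimage_equiv _)

end NormedSpace

section InnerProductSpace

variable {E : Type*} [NormedAddCommGroup E] [InnerProductSpace ℝ E] [FiniteDimensional ℝ E]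
  [MeasurableSpace E] [BorelSpace E]

theorem integral_toSphere_comp_linearIsometryEquiv (R : E ≃ₗᵢ[ℝ] E) (g : E → ℝ) :
    ∫ σ : sphere (0 : E) 1, g (R σ) ∂(volume : Measure E).toSphere =
      ∫ σ : sphere (0 : E) 1, g σ ∂(volume : Measure E).toSphere :=
  R.measurePreserving.sphereHomeomorph.integral_comp
    R.sphereHomeomorph.measurableEmbedding fun σ => g σ

theorem integral_toSphere_eq_zero_of_odd {g : E → ℝ} (hg : ∀ y, g (-y) = -g y) :
    ∫ σ : sphere (0 : E) 1, g σ ∂(volume : Measure E).toSphere = 0 := by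
  have h := integral_toSphere_comp_linearIsometryEquiv (LinearIsometryEquiv.neg ℝ) g
  simp only [LinearIsometryEquiv.coe_neg, hg, integral_neg] at h
  linarith

theorem integral_toSphere_comp_inner_of_norm_eq (f : ℝ → ℝ) {x y : E} (h : ‖x‖ = ‖y‖) :
    ∫ σ : sphere (0 : E) 1, f ⟪x, σ⟫ ∂(volume : Measure E).toSphere =
      ∫ σ : sphere (0 : E) 1, f ⟪y, σ⟫ ∂(volume : Measure E).toSphere := by
  set R := (ℝ ∙ (x - y))ᗮ.reflection
  have hR : ∀ z, ⟪y, R z⟫ = ⟪x, z⟫ := fun z => by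
    rw [← Submodule.reflection_sub h, LinearIsometryEquiv.inner_map_map]
  simp_rw [← hR]
  exact integral_toSphere_comp_linearIsometryEquiv R fun z => f ⟪y, z⟫

theorem finrank_mul_integral_toSphere_inner_sq (x : E) :
    Module.finrank ℝ E * ∫ σ : sphere (0 : E) 1, ⟪x, σ⟫ ^ 2 ∂(volume : Measure E).toSphere =
      ‖x‖ ^ 2 * (volume : Measure E).toSphere.real univ := by
  let b := stdOrthonormalBasis ℝ E
  have hint : ∀ i, Integrable (fun σ : sphere (0 : E) 1 => ⟪b i, σ⟫ ^ 2)
      (volume : Measure E).toSphere := fun i =>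
    ((continuous_const.inner continuous_subtype_val).pow 2).integrable_of_hasCompactSupport
      (HasCompactSupport.of_compactSpace _)
  calc Module.finrank ℝ E * ∫ σ : sphere (0 : E) 1, ⟪x, σ⟫ ^ 2 ∂(volume : Measure E).toSphere
      = ∑ _i : Fin (Module.finrank ℝ E),
          ∫ σ : sphere (0 : E) 1, ⟪x, σ⟫ ^ 2 ∂(volume : Measure E).toSphere := by simp
    _ = ∑ i, ∫ σ : sphere (0 : E) 1, ⟪‖x‖ • b i, σ⟫ ^ 2 ∂(volume : Measure E).toSphere :=
        Finset.sum_congr rfl fun i _ => integral_toSphere_comp_inner_of_norm_eq (· ^ 2) <| by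
          rw [norm_smul, b.norm_eq_one, mul_one, norm_norm]
    _ = ‖x‖ ^ 2 * ∫ σ : sphere (0 : E) 1, ∑ i, ⟪b i, σ⟫ ^ 2 ∂(volume : Measure E).toSphere := by
        simp_rw [real_inner_smul_left, mul_pow, integral_const_mul, ← Finset.mul_sum,
          integral_finsetSum _ fun i _ => hint i]
    _ = ‖x‖ ^ 2 * (volume : Measure E).toSphere.real univ := by
        simp_rw [b.sum_sq_inner_right, norm_eq_of_mem_sphere, one_pow, integral_const, smul_eq_mul,
          mul_one]

end InnerProductSpace

theorem rayDist_unitBall {n : ℕ} {x σ : EuclideanSpace ℝ (Fin n)} (hx : ‖x‖ < 1) (hσ : ‖σ‖ = 1) :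
    rayDist (ball 0 1) x σ = -⟪x, σ⟫ + √(1 - ‖x‖ ^ 2 + ⟪x, σ⟫ ^ 2) := by
  set a := ⟪x, σ⟫
  set s := √(1 - ‖x‖ ^ 2 + a ^ 2)
  have hs : s ^ 2 = 1 - ‖x‖ ^ 2 + a ^ 2 :=
    Real.sq_sqrt (by nlinarith [norm_nonneg x, sq_nonneg a])
  have has : |a| < s :=
    abs_lt_of_sq_lt_sq (by nlinarith [norm_nonneg x]) (Real.sqrt_nonneg _)
  obtain ⟨has₁, has₂⟩ := abs_lt.1 has
  have hnorm : ∀ t : ℝ, ‖x + t • σ‖ ^ 2 = ‖x‖ ^ 2 + 2 * t * a + t ^ 2 := fun t => by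
    rw [norm_add_sq_real, real_inner_smul_right, norm_smul, hσ, Real.norm_eq_abs, mul_one, sq_abs]
    ring
  have hset : {t : ℝ | 0 ≤ t ∧ x + t • σ ∈ ball 0 1} = Ico 0 (-a + s) := by
    ext t
    simp only [mem_ofPred_eq, mem_ball_zero_iff, mem_Ico, and_congr_right_iff]
    intro ht
    rw [← sq_lt_one_iff₀ (norm_nonneg _), hnorm]
    constructor <;> intro h
    · nlinarith
    · nlinarith [mul_pos (sub_pos.2 h) (by linarith : 0 < t + a + s)]
  rw [rayDist, hset, csSup_Ico (by linarith)]

theorem sphereMoment_unitBall_two {n : ℕ} (hn : n ≠ 0) {x : EuclideanSpace ℝ (Fin n)}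
    (hx : ‖x‖ < 1) :
    sphereMoment (ball 0 1) 2 x = 1 - (1 - 2 / n) * ‖x‖ ^ 2 := by
  have hT : (volume : Measure (EuclideanSpace ℝ (Fin n))).toSphere.real univ ≠ 0 := by
    rw [Measure.toSphere_real_apply_univ, finrank_euclideanSpace_fin]
    exact mul_ne_zero (Nat.cast_ne_zero.2 hn)
      (ENNReal.toReal_pos (measure_ball_pos _ _ one_pos).ne' measure_ball_lt_top.ne).ne'
  have hint : ∀ {f : sphere (0 : EuclideanSpace ℝ (Fin n)) 1 → ℝ}, Continuous f →
      Integrable f (volume : Measure (EuclideanSpace ℝ (Fin n))).toSphere := fun hf =>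
    hf.integrable_of_hasCompactSupport (HasCompactSupport.of_compactSpace _)
  have hc : 0 ≤ 1 - ‖x‖ ^ 2 := by nlinarith [norm_nonneg x]
  have hpt : ∀ σ : sphere (0 : EuclideanSpace ℝ (Fin n)) 1, rayDist (ball 0 1) x σ ^ 2 =
      2 * ⟪x, σ⟫ ^ 2 + (1 - ‖x‖ ^ 2) - 2 * (⟪x, σ⟫ * √(1 - ‖x‖ ^ 2 + ⟪x, σ⟫ ^ 2)) := fun σ => by
    rw [rayDist_unitBall hx (norm_eq_of_mem_sphere σ)]
    linear_combination Real.sq_sqrt (add_nonneg hc (sq_nonneg ⟪x, (σ : EuclideanSpace ℝ (Fin n))⟫))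
  have hodd := integral_toSphere_eq_zero_of_odd (g := fun y : EuclideanSpace ℝ (Fin n) =>
    ⟪x, y⟫ * √(1 - ‖x‖ ^ 2 + ⟪x, y⟫ ^ 2)) fun y => by simp [inner_neg_right]
  have hsq := finrank_mul_integral_toSphere_inner_sq x
  rw [finrank_euclideanSpace_fin] at hsq
  rw [sphereMoment, ← measureReal_def, integral_congr_ae (.of_forall hpt), integral_sub,
    integral_add, integral_const_mul, integral_const_mul, hodd, integral_const, smul_eq_mul]
  · field_simp
    linear_combination 2 * hsq
  all_goals exact hint (by fun_prop)

theorem I2_unitBall3_general (r : ℝ) (hr1 : r < 1)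
    (x : EuclideanSpace ℝ (Fin 3)) (hx : ‖x‖ = r) :
    sphereMoment (Metric.ball (0 : EuclideanSpace ℝ (Fin 3)) 1) 2 x = 1 - r ^ 2 / 3 := by
  rw [sphereMoment_unitBall_two three_ne_zero (hx ▸ hr1), hx]
  ring

/-- The mean squared distance to the boundary of the unit ball in ℝ³ from a point at
distance r from the centre. -/
theorem I2_unitBall3 (r : ℝ) (hr0 : 0 ≤ r) (hr1 : r < 1)
    (x : EuclideanSpace ℝ (Fin 3)) (hx : ‖x‖ = r) :
    sphereMoment (Metric.ball (0 : EuclideanSpace ℝ (Fin 3)) 1) 2 x = 1 - r ^ 2 / 3 :=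
  I2_unitBall3_general r hr1 x hx
end
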